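/- Let Σ₁, Σ₂ be sets with Σ₁ ∩ Σ₂ = {x₀}, and let K₁, K₂ be positive semidefinite kernels on Σ₁, Σ₂ such that K_i(σ,σ) = 1 for all σ ∈ Σ_i (i = 1,2). Then the Markov product K₁ *_{x₀} K₂ is a positive semidefinite kernel on Σ₁ ∪ Σ₂ with all diagonal values equal to 1. -/

import Mathlib

/-!
Since `K₁ x₀ x₀ = 1`, the kernel `K₁ σ τ - K₁ σ x₀ * K₁ x₀ τ` is the Schur complement of the
entry at `x₀` in the Gram matrices of `K₁`, hence positive semidefinite, and it vanishes as soon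
as one argument is `x₀`; likewise for `K₂`. Pull these two kernels back along the maps
`S₁ ∪ S₂ → S₁` and `S₁ ∪ S₂ → S₂` that collapse the other set to `x₀`, and add the rank-one kernel
`φ σ * conj (φ τ)` with `φ σ = Kᵢ σ x₀` for `σ ∈ Sᵢ`: the sum of these three positive
semidefinite kernels is the Markov product on `S₁ ∪ S₂`.
-/

open Matrix ComplexOrder

/-- A kernel `K` is positive semidefinite on a set `S` if every finite Gram matrix
built from points of `S` is positive semidefinite. -/
def IsPosSemidefKernelOn {X : Type*} (S : Set X) (K : X → X → ℂ) : Prop :=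
  ∀ (k : ℕ) (σ : Fin k → X), (∀ i, σ i ∈ S) →
    (Matrix.of fun i j => K (σ i) (σ j)).PosSemidef

/-- The Markov product of two kernels `K₁`, `K₂` on sets `S₁`, `S₂` meeting at `x₀`. -/
noncomputable def markovProduct {X : Type*} (S₁ : Set X) (x₀ : X)
    (K₁ K₂ : X → X → ℂ) : X → X → ℂ := fun σ τ =>
  open scoped Classical in
  if σ ∈ S₁ then
    if τ ∈ S₁ then K₁ σ τ else K₁ σ x₀ * K₂ x₀ τ
  else
    if τ ∈ S₁ then (starRingEnd ℂ) (K₁ τ x₀ * K₂ x₀ σ) else K₂ σ τ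

section

variable {X : Type*} {K : X → X → ℂ} {x₀ : X}

def schurComplementKernel (K : X → X → ℂ) (x₀ : X) : X → X → ℂ :=
  fun σ τ => K σ τ - K σ x₀ * K x₀ τ

theorem schurComplementKernel_base_left (hK : K x₀ x₀ = 1) (τ : X) :
    schurComplementKernel K x₀ x₀ τ = 0 := by
  simp [schurComplementKernel, hK]

theorem schurComplementKernel_base_right (hK : K x₀ x₀ = 1) (σ : X) :
    schurComplementKernel K x₀ σ x₀ = 0 := by
  simp [schurComplementKernel, hK]

end

namespace IsPosSemidefKernelOn

variable {X : Type*} {S : Set X} {K L : X → X → ℂ}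

theorem congr (h : IsPosSemidefKernelOn S K) (hKL : ∀ σ ∈ S, ∀ τ ∈ S, K σ τ = L σ τ) :
    IsPosSemidefKernelOn S L := fun k σ hσ => by
  convert h k σ hσ using 1
  ext i j
  exact (hKL _ (hσ i) _ (hσ j)).symm

theorem add (hK : IsPosSemidefKernelOn S K) (hL : IsPosSemidefKernelOn S L) :
    IsPosSemidefKernelOn S (K + L) := fun k σ hσ =>
  (hK k σ hσ).add (hL k σ hσ)

theorem comp {Y : Type*} {U : Set Y} (h : IsPosSemidefKernelOn S K) (r : Y → X)
    (hr : Set.MapsTo r U S) : IsPosSemidefKernelOn U fun σ τ => K (r σ) (r τ) :=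
  fun k σ hσ => h k (r ∘ σ) fun i => hr (hσ i)

theorem posSemidef_of_fintype (h : IsPosSemidefKernelOn S K) {ι : Type*} [Fintype ι]
    (σ : ι → X) (hσ : ∀ i, σ i ∈ S) : (Matrix.of fun i j => K (σ i) (σ j)).PosSemidef := by
  let e := Fintype.equivFin ι
  convert (h _ (σ ∘ e.symm) fun i => hσ _).submatrix e using 1
  ext i j
  simp

theorem star_apply (h : IsPosSemidefKernelOn S K) {a b : X} (ha : a ∈ S) (hb : b ∈ S) :
    star (K a b) = K b a := by
  simpa using (h.posSemidef_of_fintype ![a, b] (Fin.forall_fin_two.2 ⟨ha, hb⟩)).1.apply 1 0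

theorem schurComplement {x₀ : X} (h : IsPosSemidefKernelOn S K) (hx₀ : x₀ ∈ S)
    (hK : K x₀ x₀ = 1) :
    IsPosSemidefKernelOn S (schurComplementKernel K x₀) := by
  intro k σ hσ
  let B : Matrix Unit (Fin k) ℂ := of fun _ j => K x₀ (σ j)
  have hG := h.posSemidef_of_fintype (Sum.elim (fun _ : Unit => x₀) σ)
    (by rintro (_ | i); exacts [hx₀, hσ i])
  have hblocks : (of fun i j => K (Sum.elim (fun _ : Unit => x₀) σ i)
      (Sum.elim (fun _ : Unit => x₀) σ j)) = fromBlocks 1 B Bᴴ (of fun i j => K (σ i) (σ j)) := by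
    ext (_ | i) (_ | j) <;> simp [B, hK, h.star_apply hx₀ (hσ _)]
  let _ : Invertible (1 : Matrix Unit Unit ℂ) := invertibleOne
  rw [hblocks, PosDef.fromBlocks₁₁ (A := (1 : Matrix Unit Unit ℂ)) B _ PosDef.one, inv_one,
    Matrix.mul_one] at hG
  have hschur : (of fun i j => schurComplementKernel K x₀ (σ i) (σ j))
      = (of fun i j => K (σ i) (σ j)) - Bᴴ * B := by
    ext i j
    simp [schurComplementKernel, B, mul_apply, h.star_apply hx₀ (hσ _)]
  rwa [hschur]

end IsPosSemidefKernelOn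

theorem isPosSemidefKernelOn_rankOne {X : Type*} (S : Set X) (φ : X → ℂ) :
    IsPosSemidefKernelOn S fun σ τ => φ σ * star (φ τ) := fun _ σ _ =>
  posSemidef_vecMulVec_self_star (φ ∘ σ)

theorem isPosSemidefKernelOn_markovProduct {X : Type*} {S₁ S₂ : Set X} {x₀ : X}
    {K₁ K₂ : X → X → ℂ} (h₁ : IsPosSemidefKernelOn S₁ K₁) (h₂ : IsPosSemidefKernelOn S₂ K₂)
    (hx₁ : x₀ ∈ S₁) (hx₂ : x₀ ∈ S₂) (hd₁ : K₁ x₀ x₀ = 1) (hd₂ : K₂ x₀ x₀ = 1) :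
    IsPosSemidefKernelOn (S₁ ∪ S₂) (markovProduct S₁ x₀ K₁ K₂) := by
  classical
  let r₁ : X → X := fun σ => if σ ∈ S₁ then σ else x₀
  let r₂ : X → X := fun σ => if σ ∈ S₁ then x₀ else σ
  let φ : X → ℂ := fun σ => if σ ∈ S₁ then K₁ σ x₀ else K₂ σ x₀
  have hr₁ : Set.MapsTo r₁ (S₁ ∪ S₂) S₁ := fun σ _ => by
    by_cases hσ : σ ∈ S₁ <;> simp [r₁, hσ, hx₁]
  have hr₂ : Set.MapsTo r₂ (S₁ ∪ S₂) S₂ := fun σ hσ => by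
    by_cases hσ₁ : σ ∈ S₁ <;> simp [r₂, hσ₁, hx₂, hσ.resolve_left]
  refine ((((h₁.schurComplement hx₁ hd₁).comp r₁ hr₁).add
    ((h₂.schurComplement hx₂ hd₂).comp r₂ hr₂)).add (isPosSemidefKernelOn_rankOne _ φ)).congr ?_
  intro σ hσ τ hτ
  by_cases hσ₁ : σ ∈ S₁ <;> by_cases hτ₁ : τ ∈ S₁ <;>
    simp only [markovProduct, r₁, r₂, φ, hσ₁, hτ₁, if_true, if_false, Pi.add_apply,
      schurComplementKernel_base_left hd₁, schurComplementKernel_base_left hd₂,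
      schurComplementKernel_base_right hd₁, schurComplementKernel_base_right hd₂]
  · rw [h₁.star_apply hτ₁ hx₁, schurComplementKernel]
    ring
  · rw [h₂.star_apply (hτ.resolve_left hτ₁) hx₂]
    ring
  · rw [starRingEnd_apply, star_mul', h₂.star_apply hx₂ (hσ.resolve_left hσ₁)]
    ring
  · rw [h₂.star_apply (hτ.resolve_left hτ₁) hx₂, schurComplementKernel]
    ring

theorem markovProduct_apply_self {X : Type*} {S₁ S₂ : Set X} {x₀ : X} {K₁ K₂ : X → X → ℂ}
    (hd₁ : ∀ σ ∈ S₁, K₁ σ σ = 1) (hd₂ : ∀ σ ∈ S₂, K₂ σ σ = 1) {σ : X} (hσ : σ ∈ S₁ ∪ S₂) :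
    markovProduct S₁ x₀ K₁ K₂ σ σ = 1 := by
  by_cases hσ₁ : σ ∈ S₁
  · simp only [markovProduct, hσ₁, if_true]
    exact hd₁ σ hσ₁
  · simp only [markovProduct, hσ₁, if_false]
    exact hd₂ σ (hσ.resolve_left hσ₁)

/-- Bożejko's original extension theorem (1989). -/
theorem bozejko_markovProduct_posSemidef {X : Type*} (S₁ S₂ : Set X) (x₀ : X)
    (hint : S₁ ∩ S₂ = {x₀})
    (K₁ K₂ : X → X → ℂ)
    (h₁ : IsPosSemidefKernelOn S₁ K₁) (h₂ : IsPosSemidefKernelOn S₂ K₂)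
    (hd₁ : ∀ σ ∈ S₁, K₁ σ σ = 1) (hd₂ : ∀ σ ∈ S₂, K₂ σ σ = 1) :
    IsPosSemidefKernelOn (S₁ ∪ S₂) (markovProduct S₁ x₀ K₁ K₂) ∧
      ∀ σ ∈ S₁ ∪ S₂, markovProduct S₁ x₀ K₁ K₂ σ σ = 1 := by
  have hx₀ : x₀ ∈ S₁ ∩ S₂ := hint ▸ rfl
  exact ⟨isPosSemidefKernelOn_markovProduct h₁ h₂ hx₀.1 hx₀.2 (hd₁ x₀ hx₀.1) (hd₂ x₀ hx₀.2),
    fun σ hσ => markovProduct_apply_self hd₁ hd₂ hσ⟩
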